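/- arXiv:2509.02909 — 4 statements merged into one kernel-verified Lean document; each statement's English description precedes it below -/
import Mathlib

section
/- Let Δ ≥ 4 be an even integer and set φ = π/Δ. For all integers j, k with 0 ≤ j ≤ Δ/2 − 1, 0 ≤ k ≤ Δ/2 − 1 and j ≠ k, and all signs s, t ∈ {+1, −1}, the squared overlap satisfies |⟨j_s | k_t⟩|² ≤ cos²(π/(2Δ)), where |j_s⟩ = (1/√2)(|0⟩ + s·e^{ijφ}|1⟩) and |k_t⟩ = (1/√2)(|0⟩ + t·e^{ikφ}|1⟩) are vectors in ℂ². -/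
/-!
The overlap is `(1 + s t e^{i(k-j)φ}) / 2`, whose squared norm is `(1 + s t cos((k-j)φ)) / 2`.
Since `1 ≤ |k - j|` and `2 |k - j| ≤ Δ`, the angle `|k - j| φ` lies in `[π/Δ, π/2]`, where `|cos|`
is at most `cos (π/Δ)`; the half-angle formula turns `(1 + cos (π/Δ)) / 2` into `cos² (π/(2Δ))`.
-/

open scoped InnerProductSpace

/-- The basis vector `|j_s⟩ = (1/√2)(|0⟩ + s·e^{ijφ}|1⟩)` in ℂ². -/
noncomputable def ket (φ : ℝ) (j : ℤ) (s : ℝ) : EuclideanSpace ℂ (Fin 2) :=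
  WithLp.toLp 2 ![(1 / Real.sqrt 2 : ℂ),
    (s : ℂ) * Complex.exp (Complex.I * (j : ℂ) * (φ : ℂ)) / Real.sqrt 2]

open Complex in
lemma inner_ket (φ : ℝ) (j k : ℤ) (s t : ℝ) :
    ⟪ket φ j s, ket φ k t⟫_ℂ = (1 + (s * t : ℝ) * exp (((k - j) * φ : ℝ) * I)) / 2 := by
  have hsqrt : ((Real.sqrt 2 : ℝ) : ℂ) ^ 2 = 2 := by
    rw [← ofReal_pow, Real.sq_sqrt zero_le_two]; norm_num
  have hexp : exp (-(I * φ * j)) * exp (I * k * φ) = exp (((k - j) * φ : ℝ) * I) := by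
    rw [← exp_add]; push_cast; ring_nf
  simp only [ket, PiLp.inner_apply, Fin.sum_univ_two, Matrix.cons_val_zero,
    Matrix.cons_val_one, RCLike.inner_apply, map_div₀, map_mul, map_one,
    conj_ofReal, ← exp_conj, conj_I, map_intCast, ← hexp]
  field_simp
  rw [hsqrt]
  push_cast
  ring

open Complex in
lemma norm_one_add_mul_exp_sq (c θ : ℝ) :
    ‖1 + (c : ℂ) * exp (θ * I)‖ ^ 2 = 1 + 2 * c * Real.cos θ + c ^ 2 := by
  rw [exp_mul_I, ← ofReal_cos, ← ofReal_sin, ← normSq_eq_norm_sq, normSq_apply]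
  simp only [add_re, add_im, mul_re, mul_im, ofReal_re, ofReal_im, one_re, one_im, I_re, I_im]
  linear_combination c ^ 2 * Real.sin_sq_add_cos_sq θ

open Real

lemma abs_cos_le_cos_of_le_abs {a x : ℝ} (ha : 0 ≤ a) (hax : a ≤ |x|) (hx : |x| ≤ π / 2) :
    |cos x| ≤ cos a := by
  have hcos_nonneg : 0 ≤ cos |x| :=
    cos_nonneg_of_mem_Icc ⟨by linarith [abs_nonneg x], hx⟩
  rw [← cos_abs x, abs_of_nonneg hcos_nonneg]
  exact cos_le_cos_of_nonneg_of_le_pi ha (by linarith [pi_pos]) hax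

lemma abs_cos_int_mul_pi_div_le {m Δ : ℤ} (hm : m ≠ 0) (hmΔ : 2 * |m| ≤ Δ) :
    |cos (m * π / Δ)| ≤ cos (π / Δ) := by
  have hm_abs : (1 : ℝ) ≤ |(m : ℝ)| := by exact_mod_cast Int.one_le_abs hm
  have hmΔ' : 2 * |(m : ℝ)| ≤ Δ := by exact_mod_cast hmΔ
  have hΔ : (0 : ℝ) < Δ := by linarith
  apply abs_cos_le_cos_of_le_abs (by positivity)
  · rw [abs_div, abs_mul, abs_of_pos pi_pos, abs_of_pos hΔ]
    gcongr
    nlinarith [pi_pos]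
  · rw [abs_div, abs_mul, abs_of_pos pi_pos, abs_of_pos hΔ, div_le_iff₀ hΔ]
    nlinarith [pi_pos]

theorem overlap_wrong_basis_bound_general (Δ : ℤ)
    (φ : ℝ) (hφ : φ = Real.pi / (Δ : ℝ))
    (j k : ℤ) (hj0 : 0 ≤ j) (hj1 : j ≤ Δ / 2 - 1)
    (hk0 : 0 ≤ k) (hk1 : k ≤ Δ / 2 - 1) (hjk : j ≠ k)
    (s t : ℝ) (hs : s = 1 ∨ s = -1) (ht : t = 1 ∨ t = -1) :
    ‖⟪ket φ j s, ket φ k t⟫_ℂ‖ ^ 2 ≤ Real.cos (Real.pi / (2 * (Δ : ℝ))) ^ 2 := by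
  have hst : |s * t| = 1 := by rcases hs with rfl | rfl <;> rcases ht with rfl | rfl <;> norm_num
  have hm : k - j ≠ 0 := sub_ne_zero.mpr hjk.symm
  have hmΔ : 2 * |k - j| ≤ Δ := by cases abs_cases (k - j) <;> omega
  have hcos : |cos ((k - j) * φ)| ≤ cos (π / Δ) := by
    simpa [hφ, mul_div_assoc] using abs_cos_int_mul_pi_div_le hm hmΔ
  have hst_cos : s * t * cos ((k - j) * φ) ≤ |cos ((k - j) * φ)| := by
    simpa [abs_mul, hst] using le_abs_self (s * t * cos ((k - j) * φ))
  have hst_sq : (s * t) ^ 2 = 1 := by rw [← sq_abs, hst, one_pow]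
  calc ‖⟪ket φ j s, ket φ k t⟫_ℂ‖ ^ 2
      = (1 + 2 * (s * t) * cos ((k - j) * φ) + (s * t) ^ 2) / 4 := by
        rw [inner_ket, norm_div, div_pow, norm_one_add_mul_exp_sq]; norm_num
    _ ≤ 1 / 2 + cos (π / Δ) / 2 := by linarith
    _ = cos (π / (2 * Δ)) ^ 2 := by rw [cos_sq]; ring_nf

theorem overlap_wrong_basis_bound (Δ : ℤ) (hE : Even Δ) (hΔ : 4 ≤ Δ)
    (φ : ℝ) (hφ : φ = Real.pi / (Δ : ℝ))
    (j k : ℤ) (hj0 : 0 ≤ j) (hj1 : j ≤ Δ / 2 - 1)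
    (hk0 : 0 ≤ k) (hk1 : k ≤ Δ / 2 - 1) (hjk : j ≠ k)
    (s t : ℝ) (hs : s = 1 ∨ s = -1) (ht : t = 1 ∨ t = -1) :
    ‖⟪ket φ j s, ket φ k t⟫_ℂ‖ ^ 2 ≤ Real.cos (Real.pi / (2 * (Δ : ℝ))) ^ 2 :=
  overlap_wrong_basis_bound_general Δ φ hφ j k hj0 hj1 hk0 hk1 hjk s t hs ht
end

section
/- Let Δ ≥ 2 and D ≥ 1 be integers, let N = Δ^D, and set φ = π/N. For all integers j, k with 0 ≤ j, 0 ≤ k, 2j ≤ N − 2, 2k ≤ N − 2 and j ≠ k, and all signs s, t ∈ {+1, −1}, the squared overlap satisfies |⟨j_s | k_t⟩|² ≤ cos²(π/(2Δ^D)), where |j_s⟩ = (1/√2)(|0⟩ + s·e^{ijφ}|1⟩) and |k_t⟩ = (1/√2)(|0⟩ + t·e^{ikφ}|1⟩) are vectors in ℂ². -/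
/-!
The overlap of `|j_s⟩` and `|k_t⟩` is `(1 + s t e^{i(k-j)φ}) / 2`, whose squared modulus is
`(1 + s t cos((k-j)φ)) / 2`. With `m = |k - j|` the constraints give `1 ≤ m` and `(m + 1) φ ≤ π`,
so `±cos(mφ) ≤ cos φ`, and `(1 + cos φ) / 2 = cos²(φ/2) = cos²(π/(2N))`.
-/

open scoped InnerProductSpace

lemma inner_ket_ket (φ : ℝ) (j k : ℤ) (s t : ℝ) :
    ⟪ket φ j s, ket φ k t⟫_ℂ =
      (1 + ((s * t : ℝ) : ℂ) * Complex.exp ((((k - j : ℤ) : ℝ) * φ : ℝ) * Complex.I)) / 2 := by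
  have hexp : Complex.exp ((((k - j : ℤ) : ℝ) * φ : ℝ) * Complex.I)
      = Complex.exp (-(Complex.I * j * φ)) * Complex.exp (Complex.I * k * φ) := by
    rw [← Complex.exp_add]; push_cast; ring_nf
  have hsqrt2 : (Real.sqrt 2 : ℂ) ^ 2 = 2 := by
    rw [← Complex.ofReal_pow, Real.sq_sqrt zero_le_two]; norm_num
  have hsqrt2_ne : (Real.sqrt 2 : ℂ) ≠ 0 := by norm_cast; positivity
  simp only [ket, PiLp.inner_apply, Fin.sum_univ_two, RCLike.inner_apply, Matrix.cons_val_zero,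
    Matrix.cons_val_one, map_div₀, map_mul, map_one, Complex.conj_ofReal, ← Complex.exp_conj,
    Complex.conj_I, map_intCast, hexp]
  field_simp
  rw [hsqrt2]
  push_cast
  ring_nf

lemma norm_one_add_mul_exp_div_two_sq {c : ℝ} (hc : c ^ 2 = 1) (θ : ℝ) :
    ‖(1 + (c : ℂ) * Complex.exp (θ * Complex.I)) / 2‖ ^ 2 = (1 + c * Real.cos θ) / 2 := by
  have hsplit : (1 + (c : ℂ) * Complex.exp (θ * Complex.I)) / 2
      = (((1 + c * Real.cos θ) / 2 : ℝ) : ℂ) + ((c * Real.sin θ / 2 : ℝ) : ℂ) * Complex.I := by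
    rw [Complex.exp_mul_I, ← Complex.ofReal_cos, ← Complex.ofReal_sin]; push_cast; ring
  rw [hsplit, Complex.sq_norm, Complex.normSq_add_mul_I]
  linear_combination (c ^ 2 / 4) * Real.sin_sq_add_cos_sq θ + (1 / 4) * hc

lemma mul_cos_le_cos_of_le_abs {c x y : ℝ} (hc : c = 1 ∨ c = -1) (hx : 0 ≤ x)
    (hxy : x ≤ |y|) (hy : |y| ≤ Real.pi - x) : c * Real.cos y ≤ Real.cos x := by
  rw [← Real.cos_abs y]
  rcases hc with rfl | rfl
  · rw [one_mul]
    exact Real.cos_le_cos_of_nonneg_of_le_pi hx (by linarith) hxy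
  · rw [neg_one_mul, ← Real.cos_pi_sub]
    exact Real.cos_le_cos_of_nonneg_of_le_pi hx (by linarith) (by linarith)

theorem overlap_wrong_basis_bound_full_path_general (Δ D : ℕ)
    (N : ℤ) (hN : N = (Δ : ℤ) ^ D)
    (φ : ℝ) (hφ : φ = Real.pi / (N : ℝ))
    (j k : ℤ) (hj0 : 0 ≤ j) (hj1 : 2 * j ≤ N - 2)
    (hk0 : 0 ≤ k) (hk1 : 2 * k ≤ N - 2) (hjk : j ≠ k)
    (s t : ℝ) (hs : s = 1 ∨ s = -1) (ht : t = 1 ∨ t = -1) :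
    ‖⟪ket φ j s, ket φ k t⟫_ℂ‖ ^ 2 ≤
      Real.cos (Real.pi / (2 * (Δ : ℝ) ^ D)) ^ 2 := by
  have hst : s * t = 1 ∨ s * t = -1 := by
    rcases hs with rfl | rfl <;> rcases ht with rfl | rfl <;> norm_num
  have hst_sq : (s * t) ^ 2 = 1 := by rcases hst with h | h <;> rw [h] <;> norm_num
  have hkj_pos : 1 ≤ |k - j| := Int.one_le_abs (sub_ne_zero.mpr hjk.symm)
  have hkj_lt : |k - j| + 1 ≤ N := by
    rcases abs_cases (k - j) with ⟨h, -⟩ | ⟨h, -⟩ <;> rw [h] <;> omega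
  set m : ℝ := ((k - j : ℤ) : ℝ)
  have hm_pos : 1 ≤ |m| := by rw [← Int.cast_abs]; exact_mod_cast hkj_pos
  have hm_lt : |m| + 1 ≤ N := by rw [← Int.cast_abs]; exact_mod_cast hkj_lt
  have hN_pos : (0 : ℝ) < N := by exact_mod_cast (by omega : 0 < N)
  have hφ_pos : 0 < φ := by rw [hφ]; exact div_pos Real.pi_pos hN_pos
  have hNφ : N * φ = Real.pi := by rw [hφ]; field_simp
  have hmφ : |m * φ| = |m| * φ := by rw [abs_mul, abs_of_pos hφ_pos]
  have hcos : s * t * Real.cos (m * φ) ≤ Real.cos φ :=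
    mul_cos_le_cos_of_le_abs hst hφ_pos.le
      (hmφ ▸ le_mul_of_one_le_left hφ_pos.le hm_pos)
      (by rw [hmφ]; linarith [mul_le_mul_of_nonneg_right hm_lt hφ_pos.le])
  have hhalf : Real.pi / (2 * (Δ : ℝ) ^ D) = φ / 2 := by rw [hφ, hN]; push_cast; ring
  rw [inner_ket_ket, norm_one_add_mul_exp_div_two_sq hst_sq, hhalf, Real.cos_sq,
    mul_div_cancel₀ φ two_ne_zero]
  linarith

theorem overlap_wrong_basis_bound_full_path (Δ D : ℕ) (hΔ : 2 ≤ Δ) (hD : 1 ≤ D)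
    (N : ℤ) (hN : N = (Δ : ℤ) ^ D)
    (φ : ℝ) (hφ : φ = Real.pi / (N : ℝ))
    (j k : ℤ) (hj0 : 0 ≤ j) (hj1 : 2 * j ≤ N - 2)
    (hk0 : 0 ≤ k) (hk1 : 2 * k ≤ N - 2) (hjk : j ≠ k)
    (s t : ℝ) (hs : s = 1 ∨ s = -1) (ht : t = 1 ∨ t = -1) :
    ‖⟪ket φ j s, ket φ k t⟫_ℂ‖ ^ 2 ≤
      Real.cos (Real.pi / (2 * (Δ : ℝ) ^ D)) ^ 2 :=
  overlap_wrong_basis_bound_full_path_general Δ D N hN φ hφ j k hj0 hj1 hk0 hk1 hjk s t hs ht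
end

section
/- For all integers Δ ≥ 2 and D ≥ 1, one has D · log(1/cos²(π/(2Δ^D))) ≤ log(1/cos²(π/(2Δ))); equivalently, cos(π/(2Δ^D))^{2D} ≥ cos²(π/(2Δ)), i.e. 1/log(1/cos²(π/(2Δ^D))) ≥ D/log(1/cos²(π/(2Δ))). -/
/-! With `x = π/(2Δ)` and `y = π/(2Δ^D)` we have `D y ≤ x < π/2`, because `DΔ ≤ Δ^D`.
On `[0, π/2]` the addition formula gives `cos (a + b) ≤ cos a * cos b`, hence
`cos x ≤ cos (D y) ≤ (cos y)^D`; squaring and taking `log (1/·)` gives all three forms. -/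

open Real

namespace Real

theorem cos_nat_mul_le_cos_pow {y : ℝ} (hy : 0 ≤ y) {n : ℕ} (hny : n * y ≤ π / 2) :
    cos (n * y) ≤ cos y ^ n := by
  induction n with
  | zero => simp
  | succ n ih =>
    push_cast at hny ⊢
    have hny' : n * y ≤ π / 2 := by nlinarith
    have hcos_y : 0 ≤ cos y := cos_nonneg_of_mem_Icc ⟨by linarith [pi_pos], by nlinarith⟩
    have hsin_y : 0 ≤ sin y := sin_nonneg_of_nonneg_of_le_pi hy (by nlinarith [pi_pos])
    have hsin_ny : 0 ≤ sin (n * y) :=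
      sin_nonneg_of_nonneg_of_le_pi (by positivity) (by linarith [pi_pos])
    calc cos ((n + 1) * y) = cos (n * y) * cos y - sin (n * y) * sin y := by
          rw [add_mul, one_mul, cos_add]
      _ ≤ cos y ^ n * cos y := by nlinarith [ih hny', mul_nonneg hsin_ny hsin_y]
      _ = cos y ^ (n + 1) := (pow_succ _ n).symm

theorem cos_le_cos_pow_of_nat_mul_le {x y : ℝ} {n : ℕ} (hy : 0 ≤ y) (hnyx : n * y ≤ x)
    (hx : x ≤ π / 2) : cos x ≤ cos y ^ n :=
  calc cos x ≤ cos (n * y) :=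
        cos_le_cos_of_nonneg_of_le_pi (by positivity) (by linarith [pi_pos]) hnyx
    _ ≤ cos y ^ n := cos_nat_mul_le_cos_pow hy (hnyx.trans hx)

theorem log_one_div_sq (c : ℝ) : log (1 / c ^ 2) = -(2 * log c) := by
  rw [one_div, log_inv, log_pow, Nat.cast_ofNat]

theorem log_one_div_sq_pos {c : ℝ} (hc₀ : 0 < c) (hc₁ : c < 1) : 0 < log (1 / c ^ 2) := by
  rw [log_one_div_sq]
  linarith [log_neg hc₀ hc₁]

theorem nat_mul_log_one_div_sq_le {a b : ℝ} {n : ℕ} (ha : 0 < a) (hab : a ≤ b ^ n) :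
    n * log (1 / b ^ 2) ≤ log (1 / a ^ 2) := by
  have hlog : log a ≤ n * log b := (log_le_log ha hab).trans_eq (log_pow b n)
  rw [log_one_div_sq, log_one_div_sq]
  linarith

end Real

theorem full_path_encoding_not_better (Δ D : ℕ) (hΔ : 2 ≤ Δ) (hD : 1 ≤ D) :
    (D : ℝ) * Real.log (1 / Real.cos (Real.pi / (2 * (Δ : ℝ) ^ D)) ^ 2) ≤
        Real.log (1 / Real.cos (Real.pi / (2 * (Δ : ℝ))) ^ 2) ∧
    Real.cos (Real.pi / (2 * (Δ : ℝ) ^ D)) ^ (2 * D) ≥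
        Real.cos (Real.pi / (2 * (Δ : ℝ))) ^ 2 ∧
    1 / Real.log (1 / Real.cos (Real.pi / (2 * (Δ : ℝ) ^ D)) ^ 2) ≥
        (D : ℝ) / Real.log (1 / Real.cos (Real.pi / (2 * (Δ : ℝ))) ^ 2) := by
  have hΔ' : (2 : ℝ) ≤ Δ := by exact_mod_cast hΔ
  have hD' : (0 : ℝ) < D := by exact_mod_cast hD
  set x := π / (2 * (Δ : ℝ))
  set y := π / (2 * (Δ : ℝ) ^ D)
  have hy : 0 < y := by positivity
  have hx : x < π / 2 := div_lt_div_of_pos_left pi_pos two_pos (by linarith)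
  have hDyx : D * y ≤ x := by
    have h : (Δ : ℝ) * D ≤ (Δ : ℝ) ^ D := by exact_mod_cast Nat.mul_le_pow (by omega) D
    rw [mul_div_assoc', div_le_div_iff₀ (by positivity) (by positivity)]
    nlinarith [pi_pos]
  have hyx : y ≤ x := le_trans (le_mul_of_one_le_left hy.le (by exact_mod_cast hD)) hDyx
  have hcos_x : 0 < cos x := cos_pos_of_mem_Ioo ⟨by linarith [pi_pos], hx⟩
  have hcos : cos x ≤ cos y ^ D := cos_le_cos_pow_of_nat_mul_le hy.le hDyx hx.le
  have hlog : D * log (1 / cos y ^ 2) ≤ log (1 / cos x ^ 2) :=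
    nat_mul_log_one_div_sq_le hcos_x hcos
  have hlog_y : 0 < log (1 / cos y ^ 2) :=
    log_one_div_sq_pos (cos_pos_of_mem_Ioo ⟨by linarith, by linarith⟩)
      (by simpa using cos_lt_cos_of_nonneg_of_le_pi le_rfl (by linarith) hy)
  refine ⟨hlog, ?_, ?_⟩
  · rw [mul_comm, pow_mul]
    exact pow_le_pow_left₀ hcos_x.le hcos 2
  · calc (D : ℝ) / log (1 / cos x ^ 2) ≤ D / (D * log (1 / cos y ^ 2)) :=
          div_le_div_of_nonneg_left hD'.le (by positivity) hlog
      _ = 1 / log (1 / cos y ^ 2) := by field_simp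
end

section
/- Consider the 6-vertex graph with vertices S, U, V, T, U', V', where S, U, V form a triangle and T, U', V' are leaves attached to S, U, V respectively, and where at each of the degree-3 vertices S, U, V the three incident edges receive distinct port numbers from {0, 1, 2} (each leaf has its single edge with port 0 at the leaf). Then for every oblivious deterministic policy — i.e., every function a : Bool → {0,1,2} prescribing, as a function of whether a pebble is present at the current vertex, the port through which the agent exits a degree-3 vertex (the agent at a degree-1 vertex other than T exits through its only port) — and for every pebble placement b : {S, U, V, U', V'} → Bool, there exists an assignment of the port numbers at S, U, V (i.e., a choice of the three permutations of {0,1,2}) such that the infinite walk starting at S determined by a and b never visits the treasure vertex T. -/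
/-- The six vertices of the graph `G`: a triangle `S, U, V` with leaves
`T` (attached to `S`), `U'` (attached to `U`) and `V'` (attached to `V`). -/
inductive Vtx : Type
  | S | U | V | T | U' | V'
  deriving DecidableEq

open Vtx

/-- One step of the walk of an oblivious agent. The permutations
`σS, σU, σV : Equiv.Perm (Fin 3)` describe the assignment of the port numbers
`{0, 1, 2}` to the three edges incident to each degree-3 vertex
(the fixed enumerations of the neighbours of `S`, `U`, `V` being
`[T, U, V]`, `[U', S, V]` and `[V', S, U]` respectively).
The oblivious policy `a : Bool → Fin 3` chooses an exit port as a function of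
whether a pebble is present at the current (degree-3) vertex, according to the
pebble placement `b`. At a degree-1 vertex the agent exits through its only port. -/
def step (σS σU σV : Equiv.Perm (Fin 3)) (a : Bool → Fin 3) (b : Vtx → Bool) :
    Vtx → Vtx
  | .S => ![Vtx.T, Vtx.U, Vtx.V] (σS (a (b .S)))
  | .U => ![Vtx.U', Vtx.S, Vtx.V] (σU (a (b .U)))
  | .V => ![Vtx.V', Vtx.S, Vtx.U] (σV (a (b .V)))
  | .T => .S
  | .U' => .U
  | .V' => .V

/-- The infinite walk starting at `S` determined by the port assignment,
the oblivious policy `a` and the pebble placement `b`. -/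
def walk (σS σU σV : Equiv.Perm (Fin 3)) (a : Bool → Fin 3) (b : Vtx → Bool) :
    ℕ → Vtx
  | 0 => .S
  | n + 1 => step σS σU σV a b (walk σS σU σV a b n)

/-! The adversary labels the edge `S–U` at `S`, and the edge `U–S` at `U`, with the port the
policy selects there (neighbour index `1` in both enumerations); the agent then bounces between
`S` and `U` forever. -/

section

variable {σS σU σV : Equiv.Perm (Fin 3)} {a : Bool → Fin 3} {b : Vtx → Bool}

theorem step_S_of_port_eq_one (hS : σS (a (b S)) = 1) : step σS σU σV a b S = U := by
  simp [step, hS]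

theorem step_U_of_port_eq_one (hU : σU (a (b U)) = 1) : step σS σU σV a b U = S := by
  simp [step, hU]

theorem walk_eq_S_or_U (hS : σS (a (b S)) = 1) (hU : σU (a (b U)) = 1) (n : ℕ) :
    walk σS σU σV a b n = S ∨ walk σS σU σV a b n = U := by
  induction n with
  | zero => exact Or.inl rfl
  | succ n ih =>
    rcases ih with h | h
    · exact Or.inr (by rw [walk, h, step_S_of_port_eq_one hS])
    · exact Or.inl (by rw [walk, h, step_U_of_port_eq_one hU])

end

/-- Impossibility of deterministic treasure hunt by an oblivious agent:
for every oblivious deterministic policy `a` and every pebble placement `b`,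
there is an assignment of port numbers at `S`, `U`, `V` such that the walk
starting at `S` never visits the treasure vertex `T`. -/
theorem oblivious_agent_impossibility (a : Bool → Fin 3) (b : Vtx → Bool) :
    ∃ σS σU σV : Equiv.Perm (Fin 3),
      ∀ n : ℕ, walk σS σU σV a b n ≠ Vtx.T := by
  refine ⟨Equiv.swap (a (b S)) 1, Equiv.swap (a (b U)) 1, 1, fun n hn => ?_⟩
  rcases walk_eq_S_or_U (Equiv.swap_apply_left _ _) (Equiv.swap_apply_left _ _) n with h | h <;>
    rw [h] at hn <;> cases hn
end
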